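/- Let (N, G, φ, A) be a crossed module of groupoids, N ⋊ G its crossed product groupoid, π : N ⋊ G → G the projection functor sending the object (x, n) to x and a morphism g : (x, n) ⟶ (y, m) to g : x ⟶ y, and ρ : Bℤ × (N ⋊ G) → N ⋊ G the functor which is the identity on objects and sends (k, g : (x, n) ⟶ (y, m)) to φ_x(nᵏ) ≫ g. Fix p ≥ 1 and 1 ≤ i ≤ p, and let ι : N⋊G_{p−1} → ℤ × N⋊G_{p−1} be the map c ↦ (1, c), and let φᵢ : ℤ × N⋊G_{p−1} → (Bℤ × (N ⋊ G))_p be the map sending (k, (n, g₁, …, g_{p−1})) to the composable p-tuple of the product groupoid Bℤ × (N ⋊ G) whose ℤ-components are (0, …, 0, k, 0, …, 0) with k in position i, and whose (N ⋊ G)-components form the chain obtained from the chain corresponding to (n, g₁, …, g_{p−1}) by inserting the identity morphism at the i-th vertex. Then the composite N⋊G_{p−1} →ι ℤ × N⋊G_{p−1} →φᵢ (Bℤ × (N ⋊ G))_p → (N ⋊ G)_p → G_p, where the last two maps are induced by ρ and π on composable tuples, sends (n, g₁, …, g_{p−1}) to (g₁, …, g_{i−1}, φ_{x_{i−1}}(A(g₁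 ≫ ⋯ ≫ g_{i−1}) n), g_i, …, g_{p−1}), i.e. it equals the Tu–Xu map f̃_{i−1}. -/

import Mathlib

open CategoryTheory

universe v u w

structure CrossedModuleGpd (G : Type u) [Groupoid.{v, u} G]
    (N : G → Type w) [∀ x, Group (N x)] where
  φ : ∀ x : G, N x →* (x ⟶ x)
  A : ∀ {x y : G}, (x ⟶ y) → (N x ≃* N y)
  A_id : ∀ x : G, A (𝟙 x) = MulEquiv.refl (N x)
  A_comp : ∀ {x y z : G} (g : x ⟶ y) (h : y ⟶ z), A (g ≫ h) = (A g).trans (A h)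
  equivariance : ∀ {x y : G} (g : x ⟶ y) (n : N x),
    φ y (A g n) = Groupoid.inv g ≫ φ x n ≫ g
  peiffer : ∀ {x : G} (m n : N x), A (φ x m) n = m⁻¹ * n * m

variable {G : Type u} [Groupoid.{v, u} G] {N : G → Type w} [∀ x, Group (N x)]

def CrossedProd (_C : CrossedModuleGpd G N) : Type (max u w) := Σ x : G, N x

instance CrossedProd.category (C : CrossedModuleGpd G N) : Category (CrossedProd C) where
  Hom a b := { g : a.1 ⟶ b.1 // C.A g a.2 = b.2 }
  id a := ⟨𝟙 a.1, by rw [C.A_id]; rfl⟩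
  comp {a b c} f g := ⟨f.1 ≫ g.1, by rw [C.A_comp]; simp [f.2, g.2]⟩
  id_comp f := by apply Subtype.ext; simp
  comp_id f := by apply Subtype.ext; simp
  assoc f g h := by apply Subtype.ext; simp

abbrev BZ : Type := SingleObj (Multiplicative ℤ)

/-- The projection functor `π : N ⋊ G ⥤ G`. -/
def crossedProj (C : CrossedModuleGpd G N) : CrossedProd C ⥤ G where
  obj a := a.1
  map f := f.1
  map_id _ := rfl
  map_comp _ _ := rfl

/-- The natural groupoid homomorphism `ρ : Bℤ × (N ⋊ G) ⥤ N ⋊ G`: the identity on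
objects, sending a morphism `(k, g : (x,n) ⟶ (y,m))` to `φ_x(nᵏ) ≫ g`. -/
def crossedRho (C : CrossedModuleGpd G N) : BZ × CrossedProd C ⥤ CrossedProd C where
  obj X := X.2
  map {X Y} f := ⟨C.φ X.2.1 (X.2.2 ^ Multiplicative.toAdd f.1) ≫ f.2.1, by
    rw [C.A_comp]
    show C.A f.2.1 (C.A (C.φ X.2.1 (X.2.2 ^ Multiplicative.toAdd f.1)) X.2.2) = Y.2.2
    rw [C.peiffer]
    have : (X.2.2 ^ Multiplicative.toAdd f.1)⁻¹ * X.2.2 *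
        (X.2.2 ^ Multiplicative.toAdd f.1) = X.2.2 := by group
    rw [this, f.2.2]⟩
  map_id X := by
    apply Subtype.ext
    show C.φ X.2.1 (X.2.2 ^ Multiplicative.toAdd (1 : Multiplicative ℤ)) ≫ 𝟙 X.2.1 = 𝟙 X.2.1
    rw [Category.comp_id]
    show C.φ X.2.1 (X.2.2 ^ (0 : ℤ)) = 𝟙 X.2.1
    rw [zpow_zero, map_one]
    rfl
  map_comp {X Y Z} f g := by
    apply Subtype.ext
    show C.φ X.2.1 (X.2.2 ^ Multiplicative.toAdd (α := ℤ) (f.1 ≫ g.1)) ≫ (f.2.1 ≫ g.2.1) =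
      (C.φ X.2.1 (X.2.2 ^ Multiplicative.toAdd f.1) ≫ f.2.1) ≫
        (C.φ Y.2.1 (Y.2.2 ^ Multiplicative.toAdd g.1) ≫ g.2.1)
    have h1 : C.φ Y.2.1 (Y.2.2 ^ Multiplicative.toAdd g.1) =
        Groupoid.inv f.2.1 ≫ C.φ X.2.1 (X.2.2 ^ Multiplicative.toAdd g.1) ≫ f.2.1 := by
      have e : Y.2.2 ^ Multiplicative.toAdd g.1 =
          C.A f.2.1 (X.2.2 ^ Multiplicative.toAdd g.1) := by
        rw [map_zpow, f.2.2]
      rw [e, C.equivariance]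
    have e2 : Multiplicative.toAdd (α := ℤ) (f.1 ≫ g.1) =
        Multiplicative.toAdd f.1 + Multiplicative.toAdd g.1 :=
      add_comm (Multiplicative.toAdd g.1) (Multiplicative.toAdd f.1)
    have h2 : C.φ X.2.1 (X.2.2 ^ Multiplicative.toAdd (α := ℤ) (f.1 ≫ g.1)) =
        C.φ X.2.1 (X.2.2 ^ Multiplicative.toAdd f.1) ≫
          C.φ X.2.1 (X.2.2 ^ Multiplicative.toAdd g.1) := by
      show _ = C.φ X.2.1 (X.2.2 ^ Multiplicative.toAdd f.1) *
        C.φ X.2.1 (X.2.2 ^ Multiplicative.toAdd g.1)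
      rw [← map_mul, ← zpow_add, e2]
    rw [h1, h2]
    simp only [Category.assoc]
    congr 1
    rw [← Category.assoc f.2.1 (Groupoid.inv f.2.1), Groupoid.comp_inv, Category.id_comp]

/-- A composable `p`-tuple of morphisms in a category `D`: a chain
`x₀ →g₁ x₁ →g₂ ⋯ →g_p x_p`. -/
structure Chain (D : Type u) [Category.{v} D] (p : ℕ) where
  obj : Fin (p + 1) → D
  map : ∀ i : Fin p, obj i.castSucc ⟶ obj i.succ

namespace Chain

variable {D : Type u} [Category.{v} D]

/-- The initial vertex `x₀` of a chain. -/
def head {p : ℕ} (c : Chain D p) : D := c.obj ⟨0, Nat.succ_pos p⟩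

/-- The composite `g₁ ≫ ⋯ ≫ g_k : x₀ ⟶ x_k` of the first `k` morphisms of a chain
(the identity for `k = 0`). -/
def compToAux {p : ℕ} (c : Chain D p) : ∀ (k : ℕ) (h : k < p + 1), (c.head ⟶ c.obj ⟨k, h⟩)
  | 0, _ => 𝟙 c.head
  | (k + 1), h => c.compToAux k (by omega) ≫ c.map ⟨k, by omega⟩

/-- The composite `g₁ ≫ ⋯ ≫ g_i : x₀ ⟶ x_i` of the first `i` morphisms of a chain. -/
def compTo {p : ℕ} (c : Chain D p) (i : Fin (p + 1)) : c.head ⟶ c.obj i :=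
  c.compToAux i.val i.isLt

/-- The underlying `p`-tuple of arrows of a chain. -/
def arrows {p : ℕ} (c : Chain D p) (i : Fin p) : Arrow D := Arrow.mk (c.map i)

/-- The image of a chain under a functor. -/
def mapF {E : Type*} [Category E] (F : D ⥤ E) {p : ℕ} (c : Chain D p) : Chain E p where
  obj j := F.obj (c.obj j)
  map i := F.map (c.map i)

/-- Insertion of a loop `a : xᵢ ⟶ xᵢ` at the `i`-th vertex of a chain, producing a
composable `(q+1)`-tuple from a composable `q`-tuple. -/
def insert {q : ℕ} (c : Chain D q) (i : Fin (q + 1)) (a : c.obj i ⟶ c.obj i) :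
    Chain D (q + 1) where
  obj j := c.obj ⟨if (j : ℕ) ≤ (i : ℕ) then (j : ℕ) else (j : ℕ) - 1, by split <;> omega⟩
  map j :=
    if h : (j : ℕ) < (i : ℕ) then
      eqToHom (congrArg c.obj (Fin.ext (by simp only [Fin.coe_castSucc, Fin.val_succ, Fin.val_mk]; split <;> omega))) ≫ c.map ⟨(j : ℕ), by omega⟩ ≫
        eqToHom (congrArg c.obj (Fin.ext (by simp only [Fin.coe_castSucc, Fin.val_succ, Fin.val_mk]; split <;> omega)))
    else if h' : (j : ℕ) = (i : ℕ) then
      eqToHom (congrArg c.obj (Fin.ext (by simp only [Fin.coe_castSucc, Fin.val_succ, Fin.val_mk]; split <;> omega))) ≫ a ≫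
        eqToHom (congrArg c.obj (Fin.ext (by simp only [Fin.coe_castSucc, Fin.val_succ, Fin.val_mk]; split <;> omega)))
    else
      eqToHom (congrArg c.obj (Fin.ext (by simp only [Fin.coe_castSucc, Fin.val_succ, Fin.val_mk]; split <;> omega))) ≫
        c.map ⟨(j : ℕ) - 1, by omega⟩ ≫
        eqToHom (congrArg c.obj (Fin.ext (by simp only [Fin.coe_castSucc, Fin.val_succ, Fin.val_mk]; split <;> omega)))

/-- The `j`-th face map of the nerve: drop `g₁` (`j = 0`), compose `gⱼ ≫ g_{j+1}`
(`0 < j < p+1`), or drop `g_{p+1}` (`j = p+1`). -/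
def face {p : ℕ} (c : Chain D (p + 1)) (j : Fin (p + 2)) : Chain D p where
  obj m := c.obj ⟨if (m : ℕ) < (j : ℕ) then (m : ℕ) else (m : ℕ) + 1, by split <;> omega⟩
  map m :=
    if h : (m : ℕ) + 1 < (j : ℕ) then
      eqToHom (congrArg c.obj (Fin.ext (by simp only [Fin.coe_castSucc, Fin.val_succ, Fin.val_mk]; split <;> omega))) ≫ c.map ⟨(m : ℕ), by omega⟩ ≫
        eqToHom (congrArg c.obj (Fin.ext (by simp only [Fin.coe_castSucc, Fin.val_succ, Fin.val_mk]; split <;> omega)))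
    else if h' : (m : ℕ) + 1 = (j : ℕ) then
      eqToHom (congrArg c.obj (Fin.ext (by simp only [Fin.coe_castSucc, Fin.val_succ, Fin.val_mk]; split <;> omega))) ≫
        (c.map ⟨(m : ℕ), by omega⟩ ≫ c.map ⟨(m : ℕ) + 1, by omega⟩) ≫
        eqToHom (congrArg c.obj (Fin.ext (by simp only [Fin.coe_castSucc, Fin.val_succ, Fin.val_mk]; split <;> omega)))
    else
      eqToHom (congrArg c.obj (Fin.ext (by simp only [Fin.coe_castSucc, Fin.val_succ, Fin.val_mk]; split <;> omega))) ≫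
        c.map ⟨(m : ℕ) + 1, by omega⟩ ≫
        eqToHom (congrArg c.obj (Fin.ext (by simp only [Fin.coe_castSucc, Fin.val_succ, Fin.val_mk]; split <;> omega)))

end Chain

/-- The simplicial coboundary operator `∂* : C^p → C^{p+1}` on `ℤ`-valued singular
(cochain) functions on composable tuples: `(∂*f)(c) = Σⱼ (−1)ʲ f(ε̄ʲ c)`. -/
def cobdry (D : Type u) [Category.{v} D] (p : ℕ) (f : Chain D p → ℤ) :
    Chain D (p + 1) → ℤ :=
  fun c => ∑ j : Fin (p + 2), (-1) ^ (j : ℕ) * f (c.face j)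

variable {G : Type u} [Groupoid.{v, u} G] {N : G → Type w} [∀ x, Group (N x)]

/-- The identification `N⋊G_q ≅ (N ⋊ G)_q`: the pair `(n, g₁, …, g_q)` corresponds to
the chain of the crossed product groupoid whose `k`-th vertex is `(x_k, A(g₁ ≫ ⋯ ≫ g_k) n)`. -/
def toChain (C : CrossedModuleGpd G N) {q : ℕ} (c : Chain G q) (n : N c.head) :
    Chain (CrossedProd C) q where
  obj j := ⟨c.obj j, C.A (c.compTo j) n⟩
  map i := ⟨c.map i, by
    show C.A (c.map i) (C.A (c.compTo i.castSucc) n) = C.A (c.compTo i.succ) n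
    rw [show c.compTo i.succ = c.compTo i.castSucc ≫ c.map i from rfl, C.A_comp]
    rfl⟩

/-- The chain of `Bℤ` of length `q+1` whose `ℤ`-components are `(0, …, 0, k, 0, …, 0)`
with `k` in position `i`. -/
def zChain (q : ℕ) (k : Multiplicative ℤ) (i : Fin (q + 1)) : Chain BZ (q + 1) where
  obj _ := SingleObj.star (Multiplicative ℤ)
  map j := if j = i then k else 1

/-- Combining two chains of the same length into a chain of the product category. -/
def prodChain {D : Type*} [Category D] {E : Type*} [Category E] {p : ℕ}
    (c : Chain D p) (d : Chain E p) : Chain (D × E) p where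
  obj j := (c.obj j, d.obj j)
  map i := (c.map i, d.map i)

/-- The Tu–Xu map `f̃ᵢ : N⋊G_{p−1} → G_p`,
`f̃ᵢ(n, g₁, …, g_{p−1}) = (g₁, …, gᵢ, φ_{xᵢ}(A(g₁ ≫ ⋯ ≫ gᵢ) n), g_{i+1}, …, g_{p−1})`. -/
def tuXu (C : CrossedModuleGpd G N) {q : ℕ} (i : Fin (q + 1)) (c : Chain G q)
    (n : N c.head) : Chain G (q + 1) :=
  c.insert i (C.φ (c.obj i) (C.A (c.compTo i) n))

/-! Under `π ∘ ρ` a morphism `(k, g)` leaving `(x, m)` becomes `φ_x(mᵏ) ≫ g`. Away from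
position `i` the `ℤ`-component is `0`, so only `gⱼ` survives; at position `i` it is `1`, and
the inserted identity at the vertex `(xᵢ, A(g₁ ≫ ⋯ ≫ gᵢ) n)` becomes the loop
`φ_{xᵢ}(A(g₁ ≫ ⋯ ≫ gᵢ) n)` that `f̃ᵢ` inserts. -/

namespace Chain

variable {D : Type*} [Category D] {p q : ℕ}

theorem ext {P Q : Chain D p} (hobj : P.obj = Q.obj) (hmap : ∀ j, P.map j ≍ Q.map j) :
    P = Q := by
  obtain ⟨obj, map⟩ := P
  obtain ⟨obj', map'⟩ := Q
  dsimp only at hobj hmap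
  subst hobj
  rw [funext fun j => eq_of_heq (hmap j)]

theorem map_heq_of_eq {P Q : Chain D p} (h : P = Q) (j : Fin p) : P.map j ≍ Q.map j := by
  subst h
  rfl

theorem insert_map_of_ne (c : Chain D q) (i : Fin (q + 1)) (a b : c.obj i ⟶ c.obj i)
    {j : Fin (q + 1)} (hj : j ≠ i) : (c.insert i a).map j = (c.insert i b).map j := by
  simp only [insert, Fin.val_ne_of_ne hj, dite_false]

theorem insert_map_self (c : Chain D q) (i : Fin (q + 1)) (a : c.obj i ⟶ c.obj i) :
    (c.insert i a).map i = eqToHom (congrArg c.obj (Fin.ext (by simp))) ≫ a ≫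
      eqToHom (congrArg c.obj (Fin.ext (by simp))) := by
  simp only [insert, lt_irrefl, dite_false, dite_true]

theorem mapF_insert {E : Type*} [Category E] (F : D ⥤ E) (c : Chain D q) (i : Fin (q + 1))
    (a : c.obj i ⟶ c.obj i) : (c.insert i a).mapF F = (c.mapF F).insert i (F.map a) := by
  refine ext rfl fun j => heq_of_eq ?_
  simp only [mapF, insert]
  split_ifs <;> simp [eqToHom_map]

end Chain

theorem zChain_map_self (q : ℕ) (k : Multiplicative ℤ) (i : Fin (q + 1)) :
    (zChain q k i).map i = k := if_pos rfl

theorem zChain_map_of_ne (q : ℕ) (k : Multiplicative ℤ) {i j : Fin (q + 1)} (hj : j ≠ i) :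
    (zChain q k i).map j = (1 : Multiplicative ℤ) := if_neg hj

theorem mapF_crossedProj_mapF_crossedRho_map (C : CrossedModuleGpd G N) {p : ℕ}
    (z : Chain BZ p) (d : Chain (CrossedProd C) p) (j : Fin p) :
    (((prodChain z d).mapF (crossedRho C)).mapF (crossedProj C)).map j =
      C.φ _ ((d.obj j.castSucc).2 ^ Multiplicative.toAdd (z.map j)) ≫
        (d.mapF (crossedProj C)).map j :=
  rfl

theorem mapF_crossedProj_insert_toChain (C : CrossedModuleGpd G N) {q : ℕ} (c : Chain G q)
    (n : N c.head) (i : Fin (q + 1)) :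
    ((toChain C c n).insert i (𝟙 _)).mapF (crossedProj C) = c.insert i (𝟙 _) := by
  rw [Chain.mapF_insert]
  rfl

/-- The composite of `ι : N⋊G_{p−1} → ℤ × N⋊G_{p−1}, c ↦ (1, c)`, the map
`φᵢ : ℤ × N⋊G_{p−1} → (Bℤ × (N ⋊ G))_p` (inserting `k` in the `i`-th `ℤ`-position and
the identity at the `i`-th vertex of the `(N ⋊ G)`-chain), and the maps induced on
composable tuples by the functors `ρ : Bℤ × (N ⋊ G) ⥤ N ⋊ G` and `π : N ⋊ G ⥤ G`,
equals the Tu–Xu map `f̃ᵢ`. -/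
theorem stmt13 (C : CrossedModuleGpd G N) (q : ℕ) (i : Fin (q + 1))
    (c : Chain G q) (n : N c.head) :
    Chain.mapF (crossedProj C)
      (Chain.mapF (crossedRho C)
        (prodChain (zChain q (Multiplicative.ofAdd 1) i)
          ((toChain C c n).insert i (𝟙 ((toChain C c n).obj i))))) =
    tuXu C i c n := by
  refine Chain.ext rfl fun j => heq_of_eq ?_
  rw [mapF_crossedProj_mapF_crossedRho_map,
    eq_of_heq (Chain.map_heq_of_eq (mapF_crossedProj_insert_toChain C c n i) j)]
  dsimp only [tuXu]
  by_cases hj : j = i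
  · subst hj
    rw [zChain_map_self, toAdd_ofAdd, zpow_one, Chain.insert_map_self, Chain.insert_map_self,
      Category.id_comp]
    exact eqToHom_naturality_assoc (fun x => C.φ (c.obj x) (C.A (c.compTo x) n))
      (Fin.ext (by simp)) _
  · rw [zChain_map_of_ne _ _ hj, toAdd_one, zpow_zero, MonoidHom.map_one, End.one_def]
    exact (Category.id_comp _).trans (Chain.insert_map_of_ne _ _ _ _ hj)
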